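/- Funtime introduction (well-founded recursion with cost): suppose A is a type with denotation α, B is a functional type family over A with denotation β, P is a cost family over A with denotation in ω (so P induces a measure m(V) = p where [V/a]P ⇓ p̄ on dom(α)), and the body N satisfies: for all values V with α(V,V), whenever the recursion variable f is instantiated with a function that satisfies the specification on all arguments of strictly smaller P-measure, [V/a, F/f]N evaluates within cost [V/a]P to a value in β_{V,V}. Then F = fun f a. N satisfies the full specification: for all α-related V,V', [V/a,F/f]N ≐ [V'/a,F/f]N ∈ β_{V,V'} with cost bound [V/a]P. -/
import Mathlib


/- Cost-Aware Type Theory (Niu & Harper): the language λᶜ, its operational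
   semantics, PER semantics and the type-system construction. -/

namespace CATT

/-- Syntax of the language λᶜ (de Bruijn indices; `lam` binds two variables:
index 1 is the recursion variable `f`, index 0 is the argument `a`). -/
inductive Exp : Type
  | var : ℕ → Exp
  | funtime : Exp → Exp → Exp → Exp
  | pi : Exp → Exp → Exp
  | lam : Exp → Exp
  | app : Exp → Exp → Exp
  | nat : Exp
  | zero : Exp
  | suc : Exp → Exp
  | ifz : Exp → Exp → Exp → Exp
  | sigma : Exp → Exp → Exp
  | pair : Exp → Exp → Exp
  | fst : Exp → Exp
  | snd : Exp → Exp
  | eqty : Exp → Exp → Exp → Exp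
  | triv : Exp
  | subset : Exp → Exp → Exp
  | letc : Exp → Exp → Exp
  | univ : ℕ → Exp
  | rel2 : (ℕ → ℕ → Prop) → Exp → Exp → Exp
  | rel3 : (ℕ → ℕ → ℕ → Prop) → Exp → Exp → Exp → Exp
  | cff1 : (ℕ → ℕ) → Exp → Exp
  | cff2 : (ℕ → ℕ → ℕ) → Exp → Exp → Exp

open Exp

/-- Substitution of a closed term `v` for variable `k`
(variables above `k` are decremented). -/
def subst : Exp → ℕ → Exp → Exp
  | var n, k, v => if n = k then v else if k < n then var (n-1) else var n
  | funtime A B P, k, v => funtime (subst A k v) (subst B (k+1) v) (subst P (k+1) v)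
  | pi A B, k, v => pi (subst A k v) (subst B (k+1) v)
  | lam N, k, v => lam (subst N (k+2) v)
  | app M N, k, v => app (subst M k v) (subst N k v)
  | nat, _, _ => nat
  | zero, _, _ => zero
  | suc M, k, v => suc (subst M k v)
  | ifz M M0 M1, k, v => ifz (subst M k v) (subst M0 k v) (subst M1 (k+1) v)
  | sigma A B, k, v => sigma (subst A k v) (subst B (k+1) v)
  | pair M N, k, v => pair (subst M k v) (subst N k v)
  | fst M, k, v => fst (subst M k v)
  | snd M, k, v => snd (subst M k v)
  | eqty A M N, k, v => eqty (subst A k v) (subst M k v) (subst N k v)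
  | triv, _, _ => triv
  | subset A B, k, v => subset (subst A k v) (subst B (k+1) v)
  | letc M N, k, v => letc (subst M k v) (subst N (k+1) v)
  | univ i, _, _ => univ i
  | rel2 r M N, k, v => rel2 r (subst M k v) (subst N k v)
  | rel3 r M N O, k, v => rel3 r (subst M k v) (subst N k v) (subst O k v)
  | cff1 f M, k, v => cff1 f (subst M k v)
  | cff2 f M N, k, v => cff2 f (subst M k v) (subst N k v)

/-- The values of λᶜ. -/
inductive IsVal : Exp → Prop
  | funtime : ∀ A B P, IsVal (funtime A B P)
  | pi : ∀ A B, IsVal (pi A B)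
  | lam : ∀ N, IsVal (lam N)
  | nat : IsVal nat
  | zero : IsVal zero
  | suc : ∀ {V}, IsVal V → IsVal (suc V)
  | sigma : ∀ A B, IsVal (sigma A B)
  | pair : ∀ {V U}, IsVal V → IsVal U → IsVal (pair V U)
  | eqty : ∀ A M N, IsVal (eqty A M N)
  | triv : IsVal triv
  | subset : ∀ A B, IsVal (subset A B)
  | univ : ∀ i, IsVal (univ i)
  | rel2 : ∀ r M N, IsVal (rel2 r M N)
  | rel3 : ∀ r M N O, IsVal (rel3 r M N O)

/-- Numerals `n̄ = sucⁿ zero`. -/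
def num : ℕ → Exp
  | 0 => zero
  | n+1 => suc (num n)

/-- Call-by-value small-step structural operational semantics of λᶜ. -/
inductive Step : Exp → Exp → Prop
  | app1 {E1 E1' E2} : Step E1 E1' → Step (app E1 E2) (app E1' E2)
  | app2 {E1 E2 E2'} : IsVal E1 → Step E2 E2' → Step (app E1 E2) (app E1 E2')
  | beta {N V} : IsVal V → Step (app (lam N) V) (subst (subst N 1 (lam N)) 0 V)
  | sucCong {E E'} : Step E E' → Step (suc E) (suc E')
  | ifzCong {E E' E0 E1} : Step E E' → Step (ifz E E0 E1) (ifz E' E0 E1)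
  | ifzZero {E0 E1} : Step (ifz zero E0 E1) E0
  | ifzSuc {V E0 E1} : IsVal (suc V) → Step (ifz (suc V) E0 E1) (subst E1 0 V)
  | pair1 {E1 E1' E2} : Step E1 E1' → Step (pair E1 E2) (pair E1' E2)
  | pair2 {E1 E2 E2'} : IsVal E1 → Step E2 E2' → Step (pair E1 E2) (pair E1 E2')
  | fstCong {E E'} : Step E E' → Step (fst E) (fst E')
  | sndCong {E E'} : Step E E' → Step (snd E) (snd E')
  | fstBeta {V U} : IsVal V → IsVal U → Step (fst (pair V U)) V
  | sndBeta {V U} : IsVal V → IsVal U → Step (snd (pair V U)) U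
  | letc1 {E1 E1' E2} : Step E1 E1' → Step (letc E1 E2) (letc E1' E2)
  | letcBeta {V E2} : IsVal V → Step (letc V E2) (subst E2 0 V)
  | cff1Arg {f E E'} : Step E E' → Step (cff1 f E) (cff1 f E')
  | cff1Beta {f m} : Step (cff1 f (num m)) (num (f m))
  | cff2Arg1 {f E1 E1' E2} : Step E1 E1' → Step (cff2 f E1 E2) (cff2 f E1' E2)
  | cff2Arg2 {f E1 E2 E2'} : IsVal E1 → Step E2 E2' → Step (cff2 f E1 E2) (cff2 f E1 E2')
  | cff2Beta {f m n} : Step (cff2 f (num m) (num n)) (num (f m n))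

/-- `StepN c M N`: `M` transitions to `N` in exactly `c` steps. -/
inductive StepN : ℕ → Exp → Exp → Prop
  | refl (e) : StepN 0 e e
  | tail {c e e' e''} : Step e e' → StepN c e' e'' → StepN (c+1) e e''

/-- `M ⇓ᶜ V` : `M` evaluates to the value `V` in exactly `c` steps. -/
def EvalC (M : Exp) (c : ℕ) (V : Exp) : Prop := StepN c M V ∧ IsVal V

/-- `M ⇓ V`. -/
def Eval (M V : Exp) : Prop := ∃ c, EvalC M c V

abbrev Rel := Exp → Exp → Prop

/-- Possible type systems: relations on Val × Val × P(Val × Val). -/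
abbrev PTS := Set (Exp × Exp × Rel)

/-- Least fixed point (Knaster–Tarski) of an operator on sets. -/
def myLfp {β : Type _} (f : Set β → Set β) : Set β := sInf {s | f s ⊆ s}

/-- ω = μα. {(zero,zero)} ∪ {(suc v, suc v') | α(v,v')}. -/
def omegaSet : Set (Exp × Exp) :=
  myLfp (fun α => {p | p = (zero, zero) ∨ ∃ u u', (u, u') ∈ α ∧ p = (suc u, suc u')})

def omegaRel : Rel := fun v v' => (v, v') ∈ omegaSet

/-- `A ~ A' ↓ α ∈ τ`. -/
def sameType (A A' : Exp) (α : Rel) (τ : PTS) : Prop :=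
  ∃ A0 A0', Eval A A0 ∧ Eval A' A0' ∧ (A0, A0', α) ∈ τ

/-- `M ≐ M' ∈ α` (lifting along evaluation). -/
def sameComp (M M' : Exp) (α : Rel) : Prop :=
  ∃ V V', Eval M V ∧ Eval M' V' ∧ α V V'

/-- `a : α ▷ B ~ B' ↓ β ∈ τ`. -/
def sameTypeFam (α : Rel) (B B' : Exp) (β : Exp → Exp → Rel) (τ : PTS) : Prop :=
  ∀ V V', α V V' → sameType (subst B 0 V) (subst B' 0 V') (β V V') τ

/-- `a : α ⊨ N ≐ N' ∈ β`. -/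
def sameCompOpen (α : Rel) (N N' : Exp) (β : Exp → Exp → Rel) : Prop :=
  ∀ V V', α V V' → sameComp (subst N 0 V) (subst N' 0 V') (β V V')

/-- `M ≐ M' ∈ α [P]` : cost-aware membership. -/
def sameCComp (M M' : Exp) (α : Rel) (P : Exp) : Prop :=
  sameComp P P omegaRel ∧
  ∃ c c' V V' p, EvalC M c V ∧ EvalC M' c' V' ∧ α V V' ∧ Eval P (num p) ∧ max c c' ≤ p

/-- `a : α ⊨ N ≐ N' ∈ β [P]`. -/
def sameCCompOpen (α : Rel) (N N' : Exp) (β : Exp → Exp → Rel) (P : Exp) : Prop :=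
  sameCompOpen α P P (fun _ _ => omegaRel) ∧
  ∀ V V', α V V' → sameCComp (subst N 0 V) (subst N' 0 V') (β V V') (subst P 0 V)

/-! The clauses of the `Types` operator. -/

def NatCl : PTS := {x | x.1 = nat ∧ x.2.1 = nat ∧ x.2.2 = omegaRel}

def PiCl (τ : PTS) : PTS :=
  {x | ∃ A A' B B' α β, x.1 = pi A B ∧ x.2.1 = pi A' B' ∧
    sameType A A' α τ ∧ sameTypeFam α B B' β τ ∧
    x.2.2 = fun F F' => ∃ N N', F = lam N ∧ F' = lam N' ∧
      sameCompOpen α (subst N 1 (lam N)) (subst N' 1 (lam N')) β}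

def FuntimeCl (τ : PTS) : PTS :=
  {x | ∃ A A' B B' P P' α β, x.1 = funtime A B P ∧ x.2.1 = funtime A' B' P' ∧
    sameType A A' α τ ∧ sameTypeFam α B B' β τ ∧
    sameCompOpen α P P' (fun _ _ => omegaRel) ∧
    x.2.2 = fun F F' => ∃ N N', F = lam N ∧ F' = lam N' ∧
      sameCCompOpen α (subst N 1 (lam N)) (subst N' 1 (lam N')) β P}

def SigmaCl (τ : PTS) : PTS :=
  {x | ∃ A A' B B' α β, x.1 = sigma A B ∧ x.2.1 = sigma A' B' ∧
    sameType A A' α τ ∧ sameTypeFam α B B' β τ ∧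
    x.2.2 = fun p p' => ∃ U V U' V', p = pair U V ∧ p' = pair U' V' ∧
      α U U' ∧ β U U' V V'}

def EqCl (τ : PTS) : PTS :=
  {x | ∃ A A' M M' N N' α, x.1 = eqty A M N ∧ x.2.1 = eqty A' M' N' ∧
    sameType A A' α τ ∧ sameComp M M' α ∧ sameComp N N' α ∧
    x.2.2 = fun t t' => t = triv ∧ t' = triv ∧ sameComp M N α}

def SubsetCl (τ : PTS) : PTS :=
  {x | ∃ A A' B B' α β, x.1 = subset A B ∧ x.2.1 = subset A' B' ∧
    sameType A A' α τ ∧ sameTypeFam α B B' β τ ∧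
    x.2.2 = fun V V' => α V V' ∧ ∃ U U', β V V' U U'}

def Rel2Cl : PTS :=
  {x | ∃ r M M' N N', x.1 = rel2 r M N ∧ x.2.1 = rel2 r M' N' ∧
    sameComp M M' omegaRel ∧ sameComp N N' omegaRel ∧
    x.2.2 = fun t t' => t = triv ∧ t' = triv ∧
      ∃ m n, r m n ∧ sameComp M (num m) omegaRel ∧ sameComp N (num n) omegaRel}

def Rel3Cl : PTS :=
  {x | ∃ r M M' N N' O O', x.1 = rel3 r M N O ∧ x.2.1 = rel3 r M' N' O' ∧
    sameComp M M' omegaRel ∧ sameComp N N' omegaRel ∧ sameComp O O' omegaRel ∧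
    x.2.2 = fun t t' => t = triv ∧ t' = triv ∧
      ∃ m n o, r m n o ∧ sameComp M (num m) omegaRel ∧
        sameComp N (num n) omegaRel ∧ sameComp O (num o) omegaRel}

/-- The monotone operator `Types(v, τ)` closing `τ` under the type constructors
    and adding the universes of `v`. -/
def TypesOp (v τ : PTS) : PTS :=
  NatCl ∪ PiCl τ ∪ FuntimeCl τ ∪ SigmaCl τ ∪ EqCl τ ∪ SubsetCl τ ∪
    Rel2Cl ∪ Rel3Cl ∪ v

/-- A possible type system is a type system when it satisfies unicity,
    PER valuation, symmetry and transitivity. -/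
def IsTypeSystem (τ : PTS) : Prop :=
  (∀ A B φ φ', (A, B, φ) ∈ τ → (A, B, φ') ∈ τ → φ = φ') ∧
  (∀ A B φ, (A, B, φ) ∈ τ → Symmetric φ ∧ Transitive φ) ∧
  (∀ A B φ, (A, B, φ) ∈ τ → (B, A, φ) ∈ τ) ∧
  (∀ A B C φ, (A, B, φ) ∈ τ → (B, C, φ) ∈ τ → (A, C, φ) ∈ τ)

/-- The hierarchy `τₙ = μτ. Types(vₙ, τ)`, by strong recursion on `n`. -/
def tau : ℕ → PTS := fun n =>
  Nat.strongRecOn n (fun n ih =>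
    myLfp (TypesOp {x | ∃ i, ∃ h : i < n,
      x = (univ i, univ i, fun A B => ∃ α, (A, B, α) ∈ ih i h)}))

/-- `vₙ`: the universes below level `n`. -/
def vN (n : ℕ) : PTS :=
  {x | ∃ i, i < n ∧ x = (univ i, univ i, fun A B => ∃ α, (A, B, α) ∈ tau i)}

/-- `τₙ = μτ. Types(vₙ, τ)`. -/
def tauN (n : ℕ) : PTS := myLfp (TypesOp (vN n))

/-- `v_ω`: all universes. -/
def vOmega : PTS :=
  {x | ∃ i, x = (univ i, univ i, fun A B => ∃ α, (A, B, α) ∈ tau i)}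

/-- `τ_ω = μτ. Types(v_ω, τ)`. -/
def tauOmega : PTS := myLfp (TypesOp vOmega)

end CATT

namespace CATT

open Exp

/-- `U` is strictly smaller than `V` in the measure induced by the cost
family `P`. -/

lemma isVal_num : ∀ n, IsVal (num n)
  | 0 => IsVal.zero
  | n+1 => IsVal.suc (isVal_num n)

lemma val_no_step : ∀ {V E : Exp}, Step V E → IsVal V → False := by
  intro V E h
  induction h <;> intro hv <;> cases hv <;> simp_all

lemma num_inj : ∀ {m n : ℕ}, num m = num n → m = n := by
  intro m
  induction m with
  | zero => intro n h; cases n <;> simp [num] at h ⊢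
  | succ m ih =>
    intro n h
    cases n with
    | zero => simp [num] at h
    | succ n => simp only [num] at h; injection h with h; exact congrArg Nat.succ (ih h)

lemma step_det : ∀ {M A B : Exp}, Step M A → Step M B → A = B := by
  intro M A B h
  induction h generalizing B
  case cff1Beta f m =>
    intro hB
    generalize hX : num m = X at hB
    cases hB with
    | cff1Arg s => exact absurd s (fun s => val_no_step s (hX ▸ isVal_num m))
    | cff1Beta => cases num_inj hX; rfl
  case cff2Beta f m n =>
    intro hB
    generalize hX : num m = X at hB
    generalize hY : num n = Y at hB
    cases hB with
    | cff2Arg1 s => exact absurd s (fun s => val_no_step s (hX ▸ isVal_num m))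
    | cff2Arg2 _ s => exact absurd s (fun s => val_no_step s (hY ▸ isVal_num n))
    | cff2Beta => cases num_inj hX; cases num_inj hY; rfl
  all_goals
    intro hB; cases hB <;>
      first
      | rfl
      | (exfalso;
         solve_by_elim (maxDepth := 4)
           [val_no_step, IsVal.lam, isVal_num, IsVal.suc, IsVal.pair])
      | (congr 1 <;> solve_by_elim)
      | (exact absurd ‹Step (Exp.pair _ _) _›
          (fun s => val_no_step s (IsVal.pair ‹_› ‹_›)))

lemma stepN_val_det : ∀ {c c' : ℕ} {M V V' : Exp},
    StepN c M V → IsVal V → StepN c' M V' → IsVal V' → V = V' := by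
  intro c c' M V V' h
  induction h generalizing c' V' with
  | refl e =>
    intro hv h' hv'
    cases h' with
    | refl => rfl
    | tail s _ => exact absurd hv (fun hv => val_no_step s hv)
  | tail s _ ih =>
    intro hv h' hv'
    cases h' with
    | refl => exact absurd hv' (fun hv' => val_no_step s hv')
    | tail s' h'' => exact ih hv (step_det s s' ▸ h'') hv'

lemma eval_det {M V V' : Exp} (h : Eval M V) (h' : Eval M V') : V = V' := by
  obtain ⟨c, hs, hv⟩ := h
  obtain ⟨c', hs', hv'⟩ := h'
  exact stepN_val_det hs hv hs' hv'

lemma omega_num {v v' : Exp} (h : omegaRel v v') : ∃ n, v = num n ∧ v' = num n := by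
  have hmem : {p : Exp × Exp | ∃ n, p.1 = num n ∧ p.2 = num n} ∈
      {s | (fun α => {p | p = (zero, zero) ∨
        ∃ u u', (u, u') ∈ α ∧ p = (suc u, suc u')}) s ⊆ s} := by
    intro p hp
    rcases hp with h0 | ⟨u, u', hu, rfl⟩
    · exact ⟨0, by simp [h0, num]⟩
    · obtain ⟨n, h1, h2⟩ := hu
      exact ⟨n + 1, congrArg Exp.suc h1, congrArg Exp.suc h2⟩
  have hsub : omegaSet ⊆ _ := sInf_le hmem
  exact hsub h

def Smaller (P U V : Exp) : Prop :=
  ∃ p q : ℕ, Eval (subst P 0 U) (num p) ∧ Eval (subst P 0 V) (num q) ∧ p < q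

/-- Funtime introduction (well-founded recursion from cost specifications):
if the body `N ≐ N'` meets the specification at every `V` assuming the
recursion variable meets it on all arguments of strictly smaller `P`-measure,
then `fun f a. N ≐ fun f a. N'` meets the full specification. -/
theorem funtime_intro (α : Rel) (β : Exp → Exp → Rel) (P N N' : Exp)
    (hαsym : Symmetric α) (hαtrans : Transitive α)
    (hP : sameCompOpen α P P (fun _ _ => omegaRel))
    (hbody : ∀ V V', α V V' →
      (∀ U U', α U U' → Smaller P U V →
        sameCComp (subst (subst N 1 (lam N)) 0 U)
          (subst (subst N' 1 (lam N')) 0 U') (β U U') (subst P 0 U)) →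
      sameCComp (subst (subst N 1 (lam N)) 0 V)
        (subst (subst N' 1 (lam N')) 0 V') (β V V') (subst P 0 V)) :
    ∀ V V', α V V' →
      sameCComp (subst (subst N 1 (lam N)) 0 V)
        (subst (subst N' 1 (lam N')) 0 V') (β V V') (subst P 0 V) := by
  -- Strong induction on the P-measure of V.
  have main : ∀ n : ℕ, ∀ V V', α V V' → Eval (subst P 0 V) (num n) →
      sameCComp (subst (subst N 1 (lam N)) 0 V)
        (subst (subst N' 1 (lam N')) 0 V') (β V V') (subst P 0 V) := by
    intro n
    induction n using Nat.strong_induction_on with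
    | _ n ih =>
      intro V V' hVV' hev
      apply hbody V V' hVV'
      intro U U' hUU' hsm
      obtain ⟨p, q, hU, hV, hpq⟩ := hsm
      have hq : num q = num n := eval_det hV hev
      have : p < n := num_inj hq ▸ hpq
      exact ih p this U U' hUU' hU
  intro V V' hVV'
  obtain ⟨W, W', hW, hW', hww⟩ := hP V V' hVV'
  obtain ⟨n, rfl, rfl⟩ := omega_num hww
  exact main n V V' hVV' hW


end CATT
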